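/- Let A = ℂ⟨x, y⟩/(x² − y²) and let g be the ℂ-algebra automorphism of A determined by g(x) = i·x and g(y) = −i·y (where i² = −1). Then the fixed subalgebra A^g = {a ∈ A : g(a) = a} is isomorphic as a ℂ-algebra to the commutative polynomial ring ℂ[t, s] in two variables. -/

import Mathlib

/-- The defining relation `x² = y²` of `A = ℂ⟨x, y⟩/(x² − y²)`. -/
inductive MinusRel : FreeAlgebra ℂ (Fin 2) → FreeAlgebra ℂ (Fin 2) → Prop
  | rel : MinusRel (FreeAlgebra.ι ℂ (0 : Fin 2) * FreeAlgebra.ι ℂ (0 : Fin 2))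
      (FreeAlgebra.ι ℂ (1 : Fin 2) * FreeAlgebra.ι ℂ (1 : Fin 2))

/-- The algebra `A = ℂ⟨x, y⟩/(x² − y²)`. -/
abbrev MinusAlg : Type := RingQuot MinusRel

/-- The image of `x` in `A = ℂ⟨x, y⟩/(x² − y²)`. -/
noncomputable def mX : MinusAlg := RingQuot.mkAlgHom ℂ MinusRel (FreeAlgebra.ι ℂ (0 : Fin 2))

/-- The image of `y` in `A = ℂ⟨x, y⟩/(x² − y²)`. -/
noncomputable def mY : MinusAlg := RingQuot.mkAlgHom ℂ MinusRel (FreeAlgebra.ι ℂ (1 : Fin 2))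

section Stmt14AuxSection

set_option linter.unusedSectionVars false

namespace Stmt14Aux

lemma hXXYY : mX * mX = mY * mY := by
  have h := RingQuot.mkAlgHom_rel ℂ MinusRel.rel
  simpa only [map_mul, mX, mY] using h

noncomputable def mZ : MinusAlg := mX * mX

lemma zx : mZ * mX = mX * mZ := by rw [mZ]; noncomm_ring

lemma zy : mZ * mY = mY * mZ := by rw [mZ, hXXYY]; noncomm_ring

lemma z_central (a : MinusAlg) : mZ * a = a * mZ := by
  obtain ⟨p, rfl⟩ := RingQuot.mkAlgHom_surjective ℂ MinusRel a
  induction p with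
  | grade0 r => rw [AlgHom.commutes]; exact (Algebra.commutes r mZ).symm
  | grade1 i =>
      fin_cases i
      · exact zx
      · exact zy
  | mul p q hp hq => rw [map_mul, ← mul_assoc, hp, mul_assoc, hq, mul_assoc]
  | add p q hp hq => rw [map_add, mul_add, add_mul, hp, hq]

lemma xyyx : (mX * mY) * (mY * mX) = mZ * mZ := by
  calc (mX * mY) * (mY * mX) = mX * ((mY * mY) * mX) := by noncomm_ring
    _ = mX * ((mX * mX) * mX) := by rw [← hXXYY]
    _ = mZ * mZ := by rw [mZ]; noncomm_ring

lemma yxxy : (mY * mX) * (mX * mY) = mZ * mZ := by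
  calc (mY * mX) * (mX * mY) = mY * ((mX * mX) * mY) := by noncomm_ring
    _ = mY * ((mY * mY) * mY) := by rw [hXXYY]
    _ = (mY * mY) * (mY * mY) := by noncomm_ring
    _ = mZ * mZ := by rw [← hXXYY, mZ]

noncomputable def SS : Subalgebra ℂ MinusAlg := Algebra.adjoin ℂ {mX * mY, mY * mX}
noncomputable def TT : Subalgebra ℂ MinusAlg := Algebra.adjoin ℂ {mZ, mX * mY, mY * mX}

lemma xy_mem_SS : mX * mY ∈ SS := Algebra.subset_adjoin (by simp)
lemma yx_mem_SS : mY * mX ∈ SS := Algebra.subset_adjoin (by simp)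
lemma z_mem_TT : mZ ∈ TT := Algebra.subset_adjoin (by simp)
lemma xy_mem_TT : mX * mY ∈ TT := Algebra.subset_adjoin (by simp)
lemma yx_mem_TT : mY * mX ∈ TT := Algebra.subset_adjoin (by simp)
lemma SS_le_TT : SS ≤ TT := Algebra.adjoin_mono (by intro a ha; simp at ha ⊢; tauto)

lemma zz_mem_SS : mZ * mZ ∈ SS := by
  rw [← xyyx]; exact mul_mem xy_mem_SS yx_mem_SS

/-- moving `mX` or `mY` across an element of `TT`. -/
lemma keyT : ∀ t ∈ TT, (∃ p ∈ TT, ∃ q ∈ TT, mX * t = p * mX + q * mY) ∧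
    (∃ p ∈ TT, ∃ q ∈ TT, mY * t = p * mX + q * mY) := by
  intro t ht
  induction ht using Algebra.adjoin_induction with
  | mem a ha =>
      rcases ha with rfl | rfl | rfl
      · constructor
        · exact ⟨mZ, z_mem_TT, 0, zero_mem _, by rw [← zx]; noncomm_ring⟩
        · exact ⟨0, zero_mem _, mZ, z_mem_TT, by rw [← zy]; noncomm_ring⟩
      · constructor
        · refine ⟨0, zero_mem _, mZ, z_mem_TT, ?_⟩
          rw [mZ]; noncomm_ring
        · exact ⟨0, zero_mem _, mY * mX, yx_mem_TT, by noncomm_ring⟩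
      · constructor
        · exact ⟨mX * mY, xy_mem_TT, 0, zero_mem _, by noncomm_ring⟩
        · refine ⟨mZ, z_mem_TT, 0, zero_mem _, ?_⟩
          rw [mZ, hXXYY]; noncomm_ring
  | algebraMap r =>
      constructor
      · exact ⟨algebraMap ℂ _ r, algebraMap_mem _ r, 0, zero_mem _,
          by rw [← Algebra.commutes]; noncomm_ring⟩
      · exact ⟨0, zero_mem _, algebraMap ℂ _ r, algebraMap_mem _ r,
          by rw [← Algebra.commutes]; noncomm_ring⟩
  | add s t hs ht ihs iht =>
      obtain ⟨⟨p₁, hp₁, q₁, hq₁, e₁⟩, ⟨p₂, hp₂, q₂, hq₂, e₂⟩⟩ := ihs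
      obtain ⟨⟨p₃, hp₃, q₃, hq₃, e₃⟩, ⟨p₄, hp₄, q₄, hq₄, e₄⟩⟩ := iht
      constructor
      · exact ⟨p₁ + p₃, add_mem hp₁ hp₃, q₁ + q₃, add_mem hq₁ hq₃,
          by rw [mul_add, e₁, e₃]; noncomm_ring⟩
      · exact ⟨p₂ + p₄, add_mem hp₂ hp₄, q₂ + q₄, add_mem hq₂ hq₄,
          by rw [mul_add, e₂, e₄]; noncomm_ring⟩
  | mul s t hs ht ihs iht =>
      obtain ⟨⟨p₁, hp₁, q₁, hq₁, e₁⟩, ⟨p₂, hp₂, q₂, hq₂, e₂⟩⟩ := ihs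
      obtain ⟨⟨p₃, hp₃, q₃, hq₃, e₃⟩, ⟨p₄, hp₄, q₄, hq₄, e₄⟩⟩ := iht
      constructor
      · refine ⟨p₁ * p₃ + q₁ * p₄, add_mem (mul_mem hp₁ hp₃) (mul_mem hq₁ hp₄),
          p₁ * q₃ + q₁ * q₄, add_mem (mul_mem hp₁ hq₃) (mul_mem hq₁ hq₄), ?_⟩
        rw [← mul_assoc, e₁, add_mul, mul_assoc, mul_assoc, e₃, e₄]; noncomm_ring
      · refine ⟨p₂ * p₃ + q₂ * p₄, add_mem (mul_mem hp₂ hp₃) (mul_mem hq₂ hp₄),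
          p₂ * q₃ + q₂ * q₄, add_mem (mul_mem hp₂ hq₃) (mul_mem hq₂ hq₄), ?_⟩
        rw [← mul_assoc, e₂, add_mul, mul_assoc, mul_assoc, e₃, e₄]; noncomm_ring

def Odd1 (a : MinusAlg) : Prop := ∃ t ∈ TT, ∃ t' ∈ TT, a = t * mX + t' * mY

lemma odd1_zero : Odd1 0 := ⟨0, zero_mem _, 0, zero_mem _, by noncomm_ring⟩

lemma odd1_add {a b : MinusAlg} (ha : Odd1 a) (hb : Odd1 b) : Odd1 (a + b) := by
  obtain ⟨t, ht, t', ht', rfl⟩ := ha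
  obtain ⟨s, hs, s', hs', rfl⟩ := hb
  exact ⟨t + s, add_mem ht hs, t' + s', add_mem ht' hs', by noncomm_ring⟩

lemma even_mul_odd {e a : MinusAlg} (he : e ∈ TT) (ha : Odd1 a) : Odd1 (e * a) := by
  obtain ⟨t, ht, t', ht', rfl⟩ := ha
  exact ⟨e * t, mul_mem he ht, e * t', mul_mem he ht', by noncomm_ring⟩

lemma odd_mul_even {a f : MinusAlg} (ha : Odd1 a) (hf : f ∈ TT) : Odd1 (a * f) := by
  obtain ⟨t, ht, t', ht', rfl⟩ := ha
  obtain ⟨⟨p₁, hp₁, q₁, hq₁, e₁⟩, ⟨p₂, hp₂, q₂, hq₂, e₂⟩⟩ := keyT f hf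
  refine ⟨t * p₁ + t' * p₂, add_mem (mul_mem ht hp₁) (mul_mem ht' hp₂),
    t * q₁ + t' * q₂, add_mem (mul_mem ht hq₁) (mul_mem ht' hq₂), ?_⟩
  calc (t * mX + t' * mY) * f = t * (mX * f) + t' * (mY * f) := by noncomm_ring
    _ = t * (p₁ * mX + q₁ * mY) + t' * (p₂ * mX + q₂ * mY) := by rw [e₁, e₂]
    _ = _ := by noncomm_ring

lemma odd_mul_odd {a b : MinusAlg} (ha : Odd1 a) (hb : Odd1 b) : a * b ∈ TT := by
  obtain ⟨t, ht, t', ht', rfl⟩ := ha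
  obtain ⟨s, hs, s', hs', rfl⟩ := hb
  obtain ⟨⟨p₁, hp₁, q₁, hq₁, e₁⟩, ⟨p₃, hp₃, q₃, hq₃, e₃⟩⟩ := keyT s hs
  obtain ⟨⟨p₂, hp₂, q₂, hq₂, e₂⟩, ⟨p₄, hp₄, q₄, hq₄, e₄⟩⟩ := keyT s' hs'
  have key : (t * mX + t' * mY) * (s * mX + s' * mY) =
      t * (p₁ * mZ + q₁ * (mY * mX)) + t * (p₂ * (mX * mY) + q₂ * mZ) +
      t' * (p₃ * mZ + q₃ * (mY * mX)) + t' * (p₄ * (mX * mY) + q₄ * mZ) := by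
    have eyy : mY * mY = mZ := by rw [mZ, hXXYY]
    have exx : mX * mX = mZ := rfl
    calc (t * mX + t' * mY) * (s * mX + s' * mY)
        = t * ((mX * s) * mX) + t * ((mX * s') * mY) +
          t' * ((mY * s) * mX) + t' * ((mY * s') * mY) := by noncomm_ring
      _ = t * ((p₁ * mX + q₁ * mY) * mX) + t * ((p₂ * mX + q₂ * mY) * mY) +
          t' * ((p₃ * mX + q₃ * mY) * mX) + t' * ((p₄ * mX + q₄ * mY) * mY) := by
            rw [e₁, e₂, e₃, e₄]
      _ = t * (p₁ * (mX * mX) + q₁ * (mY * mX)) + t * (p₂ * (mX * mY) + q₂ * (mY * mY)) +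
          t' * (p₃ * (mX * mX) + q₃ * (mY * mX)) + t' * (p₄ * (mX * mY) + q₄ * (mY * mY)) := by
            noncomm_ring
      _ = _ := by rw [eyy, exx]
  rw [key]
  refine add_mem (add_mem (add_mem ?_ ?_) ?_) ?_ <;>
    exact mul_mem (by assumption)
      (add_mem (mul_mem (by assumption) (by first | exact z_mem_TT | exact yx_mem_TT | exact xy_mem_TT))
        (mul_mem (by assumption) (by first | exact z_mem_TT | exact yx_mem_TT | exact xy_mem_TT)))

/-- Every element decomposes into an even part (in `TT`) and an odd part. -/
lemma dec1 (a : MinusAlg) : ∃ e ∈ TT, ∃ o, Odd1 o ∧ a = e + o := by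
  obtain ⟨p, rfl⟩ := RingQuot.mkAlgHom_surjective ℂ MinusRel a
  induction p with
  | grade0 r =>
      exact ⟨algebraMap ℂ _ r, algebraMap_mem _ r, 0, odd1_zero, by
        rw [AlgHom.commutes, add_zero]⟩
  | grade1 i =>
      fin_cases i
      · exact ⟨0, zero_mem _, mX, ⟨1, one_mem _, 0, zero_mem _, by noncomm_ring⟩, by
          rw [zero_add]; rfl⟩
      · exact ⟨0, zero_mem _, mY, ⟨0, zero_mem _, 1, one_mem _, by noncomm_ring⟩, by
          rw [zero_add]; rfl⟩
  | mul p q hp hq =>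
      obtain ⟨e, he, o, ho, hd⟩ := hp
      obtain ⟨f, hf, o', ho', hd'⟩ := hq
      refine ⟨e * f + o * o', add_mem (mul_mem he hf) (odd_mul_odd ho ho'),
        e * o' + o * f, odd1_add (even_mul_odd he ho') (odd_mul_even ho hf), ?_⟩
      rw [map_mul, hd, hd']; noncomm_ring
  | add p q hp hq =>
      obtain ⟨e, he, o, ho, hd⟩ := hp
      obtain ⟨f, hf, o', ho', hd'⟩ := hq
      exact ⟨e + f, add_mem he hf, o + o', odd1_add ho ho', by rw [map_add, hd, hd']; abel⟩

/-- Every element of `TT` decomposes as `s + mZ * s'` with `s, s' ∈ SS`. -/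
lemma dec2 : ∀ t ∈ TT, ∃ s ∈ SS, ∃ s' ∈ SS, t = s + mZ * s' := by
  intro t ht
  induction ht using Algebra.adjoin_induction with
  | mem a ha =>
      rcases ha with rfl | rfl | rfl
      · exact ⟨0, zero_mem _, 1, one_mem _, by noncomm_ring⟩
      · exact ⟨mX * mY, xy_mem_SS, 0, zero_mem _, by noncomm_ring⟩
      · exact ⟨mY * mX, yx_mem_SS, 0, zero_mem _, by noncomm_ring⟩
  | algebraMap r => exact ⟨algebraMap ℂ _ r, algebraMap_mem _ r, 0, zero_mem _, by noncomm_ring⟩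
  | add s t hs ht ihs iht =>
      obtain ⟨s₁, hs₁, s₂, hs₂, e₁⟩ := ihs
      obtain ⟨u₁, hu₁, u₂, hu₂, e₂⟩ := iht
      exact ⟨s₁ + u₁, add_mem hs₁ hu₁, s₂ + u₂, add_mem hs₂ hu₂, by rw [e₁, e₂]; noncomm_ring⟩
  | mul s t hs ht ihs iht =>
      obtain ⟨s₁, hs₁, s₂, hs₂, e₁⟩ := ihs
      obtain ⟨u₁, hu₁, u₂, hu₂, e₂⟩ := iht
      refine ⟨s₁ * u₁ + (mZ * mZ) * (s₂ * u₂),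
        add_mem (mul_mem hs₁ hu₁) (mul_mem zz_mem_SS (mul_mem hs₂ hu₂)),
        s₁ * u₂ + s₂ * u₁, add_mem (mul_mem hs₁ hu₂) (mul_mem hs₂ hu₁), ?_⟩
      rw [e₁, e₂]
      calc (s₁ + mZ * s₂) * (u₁ + mZ * u₂)
          = s₁ * u₁ + (s₁ * mZ) * u₂ + mZ * (s₂ * u₁) + (mZ * (s₂ * mZ)) * u₂ := by noncomm_ring
        _ = s₁ * u₁ + (mZ * s₁) * u₂ + mZ * (s₂ * u₁) + (mZ * (mZ * s₂)) * u₂ := by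
              rw [← z_central s₁, ← z_central s₂]
        _ = _ := by noncomm_ring

open MvPolynomial

/-! ### The 2×2 matrix representation -/

noncomputable def matX (u v : ℂ) : Matrix (Fin 2) (Fin 2) ℂ := !![0, u; v, 0]
noncomputable def matY (u v : ℂ) : Matrix (Fin 2) (Fin 2) ℂ := !![0, v; u, 0]

noncomputable def freeRep (u v : ℂ) : FreeAlgebra ℂ (Fin 2) →ₐ[ℂ] Matrix (Fin 2) (Fin 2) ℂ :=
  FreeAlgebra.lift ℂ ![matX u v, matY u v]

lemma freeRep_rel (u v : ℂ) : ∀ ⦃a b⦄, MinusRel a b → freeRep u v a = freeRep u v b := by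
  rintro _ _ ⟨⟩
  simp only [map_mul, freeRep, FreeAlgebra.lift_ι_apply, Matrix.cons_val_zero, Matrix.cons_val_one,
    Matrix.head_cons]
  ext i j
  fin_cases i <;> fin_cases j <;>
    simp [matX, matY, Matrix.mul_apply, Fin.sum_univ_two, mul_comm]

noncomputable def rep (u v : ℂ) : MinusAlg →ₐ[ℂ] Matrix (Fin 2) (Fin 2) ℂ :=
  RingQuot.liftAlgHom ℂ ⟨freeRep u v, freeRep_rel u v⟩

lemma rep_mX (u v : ℂ) : rep u v mX = matX u v := by
  rw [mX, rep, RingQuot.liftAlgHom_mkAlgHom_apply, freeRep, FreeAlgebra.lift_ι_apply]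
  simp

lemma rep_mY (u v : ℂ) : rep u v mY = matY u v := by
  rw [mY, rep, RingQuot.liftAlgHom_mkAlgHom_apply, freeRep, FreeAlgebra.lift_ι_apply]
  simp

lemma rep_xy (u v : ℂ) : rep u v (mX * mY) = Matrix.diagonal ![u * u, v * v] := by
  rw [map_mul, rep_mX, rep_mY]
  ext i j
  fin_cases i <;> fin_cases j <;>
    simp [matX, matY, Matrix.mul_apply, Fin.sum_univ_two, Matrix.diagonal]

lemma rep_yx (u v : ℂ) : rep u v (mY * mX) = Matrix.diagonal ![v * v, u * u] := by
  rw [map_mul, rep_mX, rep_mY]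
  ext i j
  fin_cases i <;> fin_cases j <;>
    simp [matX, matY, Matrix.mul_apply, Fin.sum_univ_two, Matrix.diagonal]

/-! ### The algebra map from the polynomial ring onto `SS` -/

noncomputable instance : CommSemiring SS := by
  refine { SS.toSemiring with mul_comm := ?_ }
  have hc : ∀ a ∈ ({mX * mY, mY * mX} : Set MinusAlg), ∀ b ∈ ({mX * mY, mY * mX} : Set MinusAlg),
      a * b = b * a := by
    rintro a (rfl | rfl) b (rfl | rfl)
    · rfl
    · rw [xyyx, yxxy]
    · rw [xyyx, yxxy]
    · rfl
  exact (Algebra.isMulCommutative_adjoin ℂ hc).is_comm.comm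

noncomputable def vGen : Fin 2 → SS := ![⟨mX * mY, xy_mem_SS⟩, ⟨mY * mX, yx_mem_SS⟩]

noncomputable def phi : MvPolynomial (Fin 2) ℂ →ₐ[ℂ] SS := aeval vGen

lemma phi_surjective : Function.Surjective phi := by
  rintro ⟨a, ha⟩
  induction ha using Algebra.adjoin_induction with
  | mem x hx =>
      rcases hx with rfl | rfl
      · exact ⟨X 0, by simp [phi, vGen]⟩
      · exact ⟨X 1, by simp [phi, vGen]⟩
  | algebraMap r => exact ⟨C r, by simp [phi]; rfl⟩
  | add x y hx hy ihx ihy =>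
      obtain ⟨f, hf⟩ := ihx
      obtain ⟨f', hf'⟩ := ihy
      exact ⟨f + f', by rw [map_add, hf, hf']; rfl⟩
  | mul x y hx hy ihx ihy =>
      obtain ⟨f, hf⟩ := ihx
      obtain ⟨f', hf'⟩ := ihy
      exact ⟨f * f', by rw [map_mul, hf, hf']; rfl⟩

noncomputable def diagEval (u v : ℂ) : MvPolynomial (Fin 2) ℂ →ₐ[ℂ] Matrix (Fin 2) (Fin 2) ℂ :=
  (Matrix.diagonalAlgHom ℂ).comp
    (Pi.algHom ℂ _ ![(aeval ![u * u, v * v] : MvPolynomial (Fin 2) ℂ →ₐ[ℂ] ℂ),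
      (aeval ![v * v, u * u] : MvPolynomial (Fin 2) ℂ →ₐ[ℂ] ℂ)])

lemma rep_phi (u v : ℂ) :
    ((rep u v).comp (SS.val.comp phi)) = diagEval u v := by
  apply MvPolynomial.algHom_ext
  intro i
  fin_cases i <;>
    simp only [AlgHom.comp_apply, phi, aeval_X, vGen, diagEval, Fin.isValue, Fin.zero_eta,
      Fin.mk_one, Matrix.cons_val_zero, Matrix.cons_val_one, Matrix.head_cons,
      Subalgebra.coe_val, rep_xy, rep_yx, Matrix.diagonalAlgHom_apply, Pi.algHom_apply]
  · funext j k
    fin_cases j <;> fin_cases k <;> simp [Matrix.diagonal, Pi.algHom_apply]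
  · funext j k
    fin_cases j <;> fin_cases k <;> simp [Matrix.diagonal, Pi.algHom_apply]

open MvPolynomial

lemma phi_injective : Function.Injective phi := by
  rw [injective_iff_map_eq_zero]
  intro f hf
  have hval : ∀ u v : ℂ, (aeval ![u * u, v * v] f : ℂ) = 0 := by
    intro u v
    have h1 : ((rep u v).comp (SS.val.comp phi)) f = 0 := by
      simp [AlgHom.comp_apply, hf]
    rw [rep_phi] at h1
    have h2 := congrFun (congrFun h1 0) 0
    simpa [diagEval, Pi.algHom_apply, Matrix.diagonal_apply] using h2
  have heval : ∀ x : Fin 2 → ℂ, eval x f = 0 := by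
    intro x
    obtain ⟨u, hu⟩ := IsAlgClosed.exists_pow_nat_eq (k := ℂ) (x 0) (n := 2) (by norm_num)
    obtain ⟨v, hv⟩ := IsAlgClosed.exists_pow_nat_eq (k := ℂ) (x 1) (n := 2) (by norm_num)
    have h3 := hval u v
    rw [show ![u * u, v * v] = x from ?_] at h3
    · rw [← h3, ← coe_aeval_eq_eval]; rfl
    · funext i
      fin_cases i
      · simpa [← pow_two] using hu
      · simpa [← pow_two] using hv
  exact MvPolynomial.funext fun x => by rw [heval x, map_zero]

noncomputable def ssEquiv : SS ≃ₐ[ℂ] MvPolynomial (Fin 2) ℂ :=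
  (AlgEquiv.ofBijective phi ⟨phi_injective, phi_surjective⟩).symm

end Stmt14Aux

end Stmt14AuxSection

/-- The fixed subalgebra `A^g` of a single algebra automorphism `g` of `A`. -/
def fixedSubalgebra1 {A : Type*} [Semiring A] [Algebra ℂ A]
    (g : A ≃ₐ[ℂ] A) : Subalgebra ℂ A where
  carrier := {a | g a = a}
  mul_mem' := by
    intro a b ha hb
    show g (a * b) = a * b
    rw [map_mul, ha, hb]
  add_mem' := by
    intro a b ha hb
    show g (a + b) = a + b
    rw [map_add, ha, hb]
  algebraMap_mem' := fun r => g.commutes r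

namespace Stmt14Aux

lemma mem_fixed {A : Type*} [Semiring A] [Algebra ℂ A] (g : A ≃ₐ[ℂ] A) (a : A) :
    a ∈ fixedSubalgebra1 g ↔ g a = a := Iff.rfl

variable (g : MinusAlg ≃ₐ[ℂ] MinusAlg)
  (hx : g mX = Complex.I • mX) (hy : g mY = (-Complex.I) • mY)

include hx hy

lemma g_xy : g (mX * mY) = mX * mY := by
  rw [map_mul, hx, hy, smul_mul_assoc, mul_smul_comm, smul_smul]
  simp

lemma g_yx : g (mY * mX) = mY * mX := by
  rw [map_mul, hx, hy, smul_mul_assoc, mul_smul_comm, smul_smul]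
  simp

lemma g_z : g mZ = -mZ := by
  rw [mZ, map_mul, hx, smul_mul_assoc, mul_smul_comm, smul_smul, Complex.I_mul_I, neg_one_smul]

lemma g_fixes_SS : ∀ s ∈ SS, g s = s := by
  intro s hs
  have hle : SS ≤ fixedSubalgebra1 g := by
    apply Algebra.adjoin_le
    rintro a (rfl | rfl)
    · exact g_xy g hx hy
    · exact g_yx g hx hy
  exact hle hs

lemma g2_X : g (g mX) = -mX := by
  rw [hx, map_smul, hx, smul_smul, Complex.I_mul_I, neg_one_smul]

lemma g2_Y : g (g mY) = -mY := by
  rw [hy, map_smul, hy, smul_smul]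
  simp [Complex.I_mul_I]

lemma g2_fixes_TT : ∀ t ∈ TT, g (g t) = t := by
  intro t ht
  have hle : TT ≤ fixedSubalgebra1 (g.trans g) := by
    apply Algebra.adjoin_le
    rintro a (rfl | rfl | rfl)
    · show g (g mZ) = mZ
      rw [g_z g hx hy, map_neg, g_z g hx hy, neg_neg]
    · show g (g (mX * mY)) = mX * mY
      rw [g_xy g hx hy, g_xy g hx hy]
    · show g (g (mY * mX)) = mY * mX
      rw [g_yx g hx hy, g_yx g hx hy]
  exact hle ht

lemma fixed_eq_SS : fixedSubalgebra1 g = SS := by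
  apply le_antisymm
  · intro a ha
    rw [mem_fixed] at ha
    obtain ⟨e, he, o, ho, hdec⟩ := dec1 a
    -- the odd part vanishes
    have ho2 : g (g o) = -o := by
      obtain ⟨t, ht, t', ht', rfl⟩ := ho
      calc g (g (t * mX + t' * mY))
          = g (g t) * g (g mX) + g (g t') * g (g mY) := by
            rw [map_add, map_add, map_mul, map_mul, map_mul, map_mul]
        _ = t * (-mX) + t' * (-mY) := by
            rw [g2_fixes_TT g hx hy t ht, g2_fixes_TT g hx hy t' ht',
              g2_X g hx hy, g2_Y g hx hy]
        _ = -(t * mX + t' * mY) := by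
            have h1 : t * -mX = -(t * mX) := mul_neg t mX
            have h2 : t' * -mY = -(t' * mY) := mul_neg t' mY
            have h3 : -(t * mX) + -(t' * mY) = -(t * mX + t' * mY) := (neg_add _ _).symm
            rw [h1, h2, h3]
    have h2 : g (g a) = a := by rw [ha, ha]
    have h3 : e + -o = e + o := by
      have hh : g (g (e + o)) = e + -o := by
        rw [map_add, map_add, g2_fixes_TT g hx hy e he, ho2]
      calc e + -o = g (g (e + o)) := hh.symm
        _ = g (g a) := by rw [← hdec]
        _ = a := h2
        _ = e + o := hdec
    have ho0 : o = 0 := by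
      have h4 : (2 : ℂ) • o = 0 := by
        rw [two_smul]
        nth_rewrite 1 [← add_left_cancel h3]
        exact neg_add_cancel o
      have := smul_eq_zero.mp h4
      simpa using this
    have haTT : a ∈ TT := by rw [hdec, ho0, add_zero]; exact he
    -- now decompose inside TT
    obtain ⟨s, hs, s', hs', hd⟩ := dec2 a haTT
    have hga : g a = s + -mZ * s' := by
      rw [hd, map_add, map_mul, g_fixes_SS g hx hy s hs, g_fixes_SS g hx hy s' hs',
        g_z g hx hy]
    have h5 : s + -mZ * s' = s + mZ * s' := by rw [← hga, ha, hd]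
    have h6 : mZ * s' = 0 := by
      have h7 : (2 : ℂ) • (mZ * s') = 0 := by
        rw [two_smul]
        nth_rewrite 1 [← add_left_cancel h5]
        have hnm : -mZ * s' = -(mZ * s') := neg_mul mZ s'
        rw [hnm]
        exact neg_add_cancel _
      have := smul_eq_zero.mp h7
      simpa using this
    rw [hd, h6, add_zero]
    exact hs
  · apply Algebra.adjoin_le
    rintro a (rfl | rfl)
    · exact g_xy g hx hy
    · exact g_yx g hx hy

end Stmt14Aux

theorem stmt14 (g : MinusAlg ≃ₐ[ℂ] MinusAlg)
    (hx : g mX = Complex.I • mX) (hy : g mY = (-Complex.I) • mY) :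
    Nonempty ((fixedSubalgebra1 g) ≃ₐ[ℂ] MvPolynomial (Fin 2) ℂ) := by
  exact ⟨(Subalgebra.equivOfEq _ _ (Stmt14Aux.fixed_eq_SS g hx hy)).trans Stmt14Aux.ssEquiv⟩
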